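/- arXiv:1212.0975 — 3 statements merged into one kernel-verified Lean document; each statement's English description precedes it below -/
import Mathlib

section
/- For the cost-sensitive exponential loss with φ₁(f) = exp(−C₁f) and φ₋₁(f) = exp(C₋₁f), the conditional risk C(η,f) = η·exp(−C₁f) + (1−η)·exp(C₋₁f) is minimized over f ∈ ℝ at f*(η) = (1/(C₁+C₋₁))·log(ηC₁/((1−η)C₋₁)) for η ∈ (0,1). -/
theorem cs_exp_loss_minimizer (C1 Cm : ℝ) (hC1 : 0 < C1) (hCm : 0 < Cm)
    (η : ℝ) (hη : η ∈ Set.Ioo (0:ℝ) 1) :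
    ∀ f : ℝ,
      η * Real.exp (-(C1 * ((1 / (C1 + Cm)) * Real.log (η * C1 / ((1 - η) * Cm))))) +
          (1 - η) * Real.exp (Cm * ((1 / (C1 + Cm)) * Real.log (η * C1 / ((1 - η) * Cm))))
        ≤ η * Real.exp (-(C1 * f)) + (1 - η) * Real.exp (Cm * f) := by
  obtain ⟨hη0, hη1⟩ := hη
  intro f
  have h1η : 0 < 1 - η := by linarith
  have hs0 : (0:ℝ) < C1 + Cm := by positivity
  have hr : 0 < η * C1 / ((1 - η) * Cm) := by positivity
  set L := Real.log (η * C1 / ((1 - η) * Cm)) with hL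
  set fs := (1 / (C1 + Cm)) * L with hfs
  have hexpL : Real.exp L = η * C1 / ((1 - η) * Cm) := Real.exp_log hr
  have key : η * C1 * Real.exp (-(C1 * fs)) = (1 - η) * Cm * Real.exp (Cm * fs) := by
    have h1 : -(C1 * fs) = Cm * fs + (-L) := by
      rw [hfs]; field_simp; ring
    rw [h1, Real.exp_add, Real.exp_neg, hexpL]
    field_simp
  set t := f - fs with ht
  have e1 : Real.exp (-(C1 * f)) = Real.exp (-(C1 * fs)) * Real.exp (-(C1 * t)) := by
    rw [← Real.exp_add]; congr 1; rw [ht]; ring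
  have e2 : Real.exp (Cm * f) = Real.exp (Cm * fs) * Real.exp (Cm * t) := by
    rw [← Real.exp_add]; congr 1; rw [ht]; ring
  have b1 : 1 + (-(C1 * t)) ≤ Real.exp (-(C1 * t)) := by
    linarith [Real.add_one_le_exp (-(C1 * t))]
  have b2 : 1 + Cm * t ≤ Real.exp (Cm * t) := by
    linarith [Real.add_one_le_exp (Cm * t)]
  have p1 : (0:ℝ) < Real.exp (-(C1 * fs)) := Real.exp_pos _
  have p2 : (0:ℝ) < Real.exp (Cm * fs) := Real.exp_pos _
  rw [e1, e2]
  have h5 : t * (η * C1 * Real.exp (-(C1 * fs))) = t * ((1 - η) * Cm * Real.exp (Cm * fs)) := by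
    rw [key]
  nlinarith [mul_le_mul_of_nonneg_left b1 (le_of_lt (mul_pos hη0 p1)),
    mul_le_mul_of_nonneg_left b2 (le_of_lt (mul_pos h1η p2)), h5]
end

section
/- (Savage) Suppose I(η, η̂) = η·I₁(η̂) + (1−η)·I₋₁(η̂) satisfies I(η, η̂) ≤ I(η, η) = J(η) for all η, η̂ ∈ (0,1), with equality iff η̂ = η, and I₁, I₋₁, J are differentiable. Then J is convex and I₁(η) = J(η) + (1−η)J′(η), I₋₁(η) = J(η) − η·J′(η). -/
/-!
For a fixed report `z`, the expected score `η ↦ η * I1 z + (1 - η) * Im z` is affine in `η`;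
by elicitation it lies below `J` and touches it at `η = z`. So `J` is a supremum of affine
functions, hence convex, and its slope at `η` is that of the tangent line, `I1 η - Im η`: this is
the first-order condition for the maximum of `η̂ ↦ η * I1 η̂ + (1 - η) * Im η̂` at `η̂ = η`,
combined with the product rule.
-/

open Filter Topology

theorem ConvexOn.of_forall_affineMap_le_eq {E : Type*} [AddCommGroup E] [Module ℝ E]
    {s : Set E} {f : E → ℝ} (hs : Convex ℝ s)
    (h : ∀ z ∈ s, ∃ g : E →ᵃ[ℝ] ℝ, g z = f z ∧ ∀ x ∈ s, g x ≤ f x) : ConvexOn ℝ s f := by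
  refine ⟨hs, fun x hx y hy a b ha hb hab => ?_⟩
  obtain ⟨g, hgz, hg⟩ := h _ (hs hx hy ha hb hab)
  calc f (a • x + b • y) = a • g x + b • g y := by rw [← hgz, Convex.combo_affine_apply hab]
    _ ≤ a • f x + b • f y := by gcongr <;> exact hg _ ‹_›

theorem hasDerivAt_diag_of_isLocalMax {I1 Im : ℝ → ℝ} {η : ℝ}
    (h1 : DifferentiableAt ℝ I1 η) (h2 : DifferentiableAt ℝ Im η)
    (hmax : IsLocalMax (fun t => η * I1 t + (1 - η) * Im t) η) :
    HasDerivAt (fun t => t * I1 t + (1 - t) * Im t) (I1 η - Im η) η := by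
  have hscore : HasDerivAt (fun t => η * I1 t + (1 - η) * Im t)
      (η * deriv I1 η + (1 - η) * deriv Im η) η :=
    (h1.hasDerivAt.const_mul η).add (h2.hasDerivAt.const_mul (1 - η))
  have hfirst_order : η * deriv I1 η + (1 - η) * deriv Im η = 0 :=
    hscore.deriv ▸ hmax.deriv_eq_zero
  have hdiag := ((hasDerivAt_id η).mul h1.hasDerivAt).add
    (((hasDerivAt_const η 1).sub (hasDerivAt_id η)).mul h2.hasDerivAt)
  refine hdiag.congr_deriv ?_
  simp only [id_eq, Pi.sub_apply]
  linear_combination hfirst_order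

theorem savage_representation_general (I1 Im J : ℝ → ℝ)
    (hI1 : ∀ η ∈ Set.Ioo (0:ℝ) 1, DifferentiableAt ℝ I1 η)
    (hIm : ∀ η ∈ Set.Ioo (0:ℝ) 1, DifferentiableAt ℝ Im η)
    (hJ : ∀ η ∈ Set.Ioo (0:ℝ) 1, J η = η * I1 η + (1 - η) * Im η)
    (helicit : ∀ η ∈ Set.Ioo (0:ℝ) 1, ∀ ηhat ∈ Set.Ioo (0:ℝ) 1,
        η * I1 ηhat + (1 - η) * Im ηhat ≤ J η ∧
        (η * I1 ηhat + (1 - η) * Im ηhat = J η ↔ ηhat = η)) :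
    ConvexOn ℝ (Set.Ioo (0:ℝ) 1) J ∧
      ∀ η ∈ Set.Ioo (0:ℝ) 1,
        I1 η = J η + (1 - η) * deriv J η ∧ Im η = J η - η * deriv J η := by
  refine ⟨ConvexOn.of_forall_affineMap_le_eq (convex_Ioo 0 1) fun z hz => ?_, fun η hη => ?_⟩
  · refine ⟨AffineMap.lineMap (Im z) (I1 z), ?_, fun x hx => ?_⟩
    · rw [AffineMap.lineMap_apply_ring, hJ z hz]; ring
    · rw [AffineMap.lineMap_apply_ring]; linarith [(helicit x hx z hz).1]
  have hmax : IsLocalMax (fun t => η * I1 t + (1 - η) * Im t) η := by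
    filter_upwards [isOpen_Ioo.mem_nhds hη] with t ht
    exact (hJ η hη).symm ▸ (helicit η hη t ht).1
  have hJ_eq : J =ᶠ[𝓝 η] fun t => t * I1 t + (1 - t) * Im t :=
    eventually_of_mem (isOpen_Ioo.mem_nhds hη) hJ
  have hderiv : deriv J η = I1 η - Im η :=
    ((hasDerivAt_diag_of_isLocalMax (hI1 η hη) (hIm η hη) hmax).congr_of_eventuallyEq hJ_eq).deriv
  rw [hderiv, hJ η hη]
  constructor <;> ring

theorem savage_representation (I1 Im J : ℝ → ℝ)
    (hI1 : ∀ η ∈ Set.Ioo (0:ℝ) 1, DifferentiableAt ℝ I1 η)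
    (hIm : ∀ η ∈ Set.Ioo (0:ℝ) 1, DifferentiableAt ℝ Im η)
    (hJd : ∀ η ∈ Set.Ioo (0:ℝ) 1, DifferentiableAt ℝ J η)
    (hJ : ∀ η ∈ Set.Ioo (0:ℝ) 1, J η = η * I1 η + (1 - η) * Im η)
    (helicit : ∀ η ∈ Set.Ioo (0:ℝ) 1, ∀ ηhat ∈ Set.Ioo (0:ℝ) 1,
        η * I1 ηhat + (1 - η) * Im ηhat ≤ J η ∧
        (η * I1 ηhat + (1 - η) * Im ηhat = J η ↔ ηhat = η)) :
    ConvexOn ℝ (Set.Ioo (0:ℝ) 1) J ∧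
      ∀ η ∈ Set.Ioo (0:ℝ) 1,
        I1 η = J η + (1 - η) * deriv J η ∧ Im η = J η - η * deriv J η :=
  savage_representation_general I1 Im J hI1 hIm hJ helicit
end

section
/- Let g : (0,1) → ℝ be invertible, J : (0,1) → ℝ differentiable convex, I₁(η) = J(η) + (1−η)J′(η), I₋₁(η) = J(η) − η·J′(η), and define φ₁, φ₋₁ by φ₁(g(η)) = −I₁(η), φ₋₁(−g(η)) = −I₋₁(η). Then for every η ∈ (0,1), the conditional risk C(η,f) = η·φ₁(f) + (1−η)·φ₋₁(−f) over f in the range of g is minimized at f = g(η), with minimum value −J(η). -/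
lemma tangent_le {J : ℝ → ℝ} {s : Set ℝ} (hconv : ConvexOn ℝ s J)
    {x y : ℝ} (hx : x ∈ s) (hy : y ∈ s) (hd : DifferentiableAt ℝ J x) :
    J x + (y - x) * deriv J x ≤ J y := by
  rcases lt_trichotomy x y with h | h | h
  · have h1 := hconv.deriv_le_slope hx hy h hd
    rw [slope_def_field, le_div_iff₀ (by linarith)] at h1
    linarith
  · simp [h]
  · have h1 := hconv.slope_le_deriv hy hx h hd
    rw [slope_def_field, div_le_iff₀ (by linarith)] at h1
    linarith

theorem cs_loss_design (g : ℝ → ℝ) (J : ℝ → ℝ) (φ1 φm : ℝ → ℝ)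
    (hginj : Set.InjOn g (Set.Ioo (0:ℝ) 1))
    (hJd : ∀ η ∈ Set.Ioo (0:ℝ) 1, DifferentiableAt ℝ J η)
    (hconv : ConvexOn ℝ (Set.Ioo (0:ℝ) 1) J)
    (hφ1 : ∀ η ∈ Set.Ioo (0:ℝ) 1, φ1 (g η) = -(J η + (1 - η) * deriv J η))
    (hφm : ∀ η ∈ Set.Ioo (0:ℝ) 1, φm (-(g η)) = -(J η - η * deriv J η)) :
    ∀ η ∈ Set.Ioo (0:ℝ) 1,
      (∀ f ∈ g '' Set.Ioo (0:ℝ) 1,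
          η * φ1 (g η) + (1 - η) * φm (-(g η)) ≤ η * φ1 f + (1 - η) * φm (-f)) ∧
      η * φ1 (g η) + (1 - η) * φm (-(g η)) = -(J η) := by
  intro η hη
  have key : η * φ1 (g η) + (1 - η) * φm (-(g η)) = -(J η) := by
    rw [hφ1 η hη, hφm η hη]; ring
  refine ⟨?_, key⟩
  rintro f ⟨ηh, hηh, rfl⟩
  rw [key, hφ1 ηh hηh, hφm ηh hηh]
  have := tangent_le hconv hηh hη (hJd ηh hηh)
  nlinarith [this]
end
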